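/- Let α ∈ (1,2), c > 1, θ admissible, φ the measure on (−∞,0) with φ((−∞,−x)) = x^{−α}θ(log x), ψ(z) = ∫_{(−∞,0)} (e^{izx} − 1 − izx) dφ(x), ξ(s) the unique positive real with ψ(−i·ξ(s)) = s, m(y) = e^{−αy}·ψ(−i·e^y), and f(s) = (1/α)·ξ(s)^α·m'(log ξ(s)). Then the function γ(x) := e^{−x/α}·(−f(e^x)/(e^x + f(e^x)))·ξ(e^x) is continuous and log(c)-periodic, i.e. γ(x + log c) = γ(x) for all x ∈ ℝ; equivalently, (−f(s)/(s + f(s)))·ξ(s) = s^{1/α}·γ(log s) for all s > 0. -/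

import Mathlib

open MeasureTheory Set Filter

/-- The log-characteristic function of a negatively skewed semistable law with Levy
measure `φm` concentrated on the negative half-line:
`ψ(z) = ∫_{(-∞,0)} (e^{izx} - 1 - izx) dφ(x)`. -/
noncomputable def psiSemi (φm : MeasureTheory.Measure ℝ) (z : ℂ) : ℂ :=
  ∫ x in Set.Iio (0 : ℝ),
    (Complex.exp (Complex.I * z * (x : ℂ)) - 1 - Complex.I * z * (x : ℂ)) ∂φm

/-- The log-periodic symbol factor `m(y) = e^{-αy} ψ(-i e^y)` (real-valued). -/
noncomputable def mFun (φm : MeasureTheory.Measure ℝ) (α : ℝ) (y : ℝ) : ℝ :=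
  Real.exp (-(α * y)) * (psiSemi φm (-(Complex.I * (Real.exp y : ℂ)))).re

/-- The function `γ(x) = e^{-x/α} (−f(e^x)/(e^x + f(e^x))) ξ(e^x)`. -/
noncomputable def gammaFun (α : ℝ) (f ξ : ℝ → ℝ) (x : ℝ) : ℝ :=
  Real.exp (-x / α) * (-(f (Real.exp x)) / (Real.exp x + f (Real.exp x))) * ξ (Real.exp x)

/-!
For `k > 0`, `ψ(-ik) = L(k) := ∫_{x<0} (e^{kx} - 1 - kx) dφ(x)` is real. The tail formula and
the periodicity of `θ` give `φ(-∞, a / c^{1/α}) = c φ(-∞, a)`, so by the layer-cake formula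
`L(c^{1/α} k) = c L(k)`. Since `L(ξ 1) = 1`, this scaling makes `L` finite on `[0, ∞)`, hence
strictly increasing and differentiable under the integral sign. Its inverse `ξ` is then
continuous with `ξ(cs) = c^{1/α} ξ(s)`, and `m` is `log c^{1/α}`-periodic, so `f(cs) = c f(s)`:
these two homogeneities are the periodicity of `γ`. Continuity comes from
`f(s) = ξ(s) L'(ξ(s)) / α - s`, which also shows `s + f(s) > 0`.
-/

open Real

namespace Semistable

noncomputable def expRemainder (u : ℝ) : ℝ := exp u - 1 - u

lemma mul_sub_lt_expRemainder_sub {u v : ℝ} (h : u ≠ v) :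
    (exp v - 1) * (u - v) < expRemainder u - expRemainder v := by
  have hexp : exp u = exp v * exp (u - v) := by rw [← exp_add, add_sub_cancel]
  have := mul_lt_mul_of_pos_left (add_one_lt_exp (sub_ne_zero.2 h)) (exp_pos v)
  unfold expRemainder
  nlinarith

lemma mul_sub_le_expRemainder_sub (u v : ℝ) :
    (exp v - 1) * (u - v) ≤ expRemainder u - expRemainder v := by
  rcases eq_or_ne u v with rfl | h
  · simp
  · exact (mul_sub_lt_expRemainder_sub h).le

lemma expRemainder_nonneg (u : ℝ) : 0 ≤ expRemainder u := by
  simpa [expRemainder] using mul_sub_le_expRemainder_sub u 0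

lemma strictAntiOn_expRemainder : StrictAntiOn expRemainder (Iic 0) := by
  intro u _ v hv huv
  have := mul_sub_lt_expRemainder_sub huv.ne
  nlinarith [exp_le_one_iff.2 (show v ≤ 0 from hv)]

@[fun_prop]
lemma continuous_expRemainder : Continuous expRemainder := by
  unfold expRemainder; fun_prop

lemma hasDerivAt_expRemainder_mul (x k : ℝ) :
    HasDerivAt (fun k => expRemainder (k * x)) (x * (exp (k * x) - 1)) k := by
  have hderiv : HasDerivAt expRemainder (exp (k * x) - 1) (k * x) :=
    ((hasDerivAt_exp _).sub_const 1).sub (hasDerivAt_id _)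
  exact (hderiv.comp k (hasDerivAt_mul_const x)).congr_deriv (mul_comm _ _)

lemma exists_lt_expRemainder_iff {t : ℝ} (ht : 0 < t) :
    ∃ b < 0, ∀ u ≤ 0, t < expRemainder u ↔ u < b := by
  obtain ⟨b, hb, hbt⟩ : ∃ b ∈ Icc (-(t + 2)) 0, expRemainder b = t :=
    intermediate_value_Icc' (by linarith) continuous_expRemainder.continuousOn
      ⟨by simpa [expRemainder] using ht.le,
        by unfold expRemainder; linarith [exp_pos (-(t + 2))]⟩
  have hb0 : b < 0 := hb.2.lt_of_ne (by rintro rfl; simp [expRemainder] at hbt; linarith)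
  refine ⟨b, hb0, fun u hu => ?_⟩
  rw [← hbt]
  exact strictAntiOn_expRemainder.lt_iff_gt hb.2 hu

lemma norm_mul_exp_sub_one_le {b k x : ℝ} (hb : 0 < b) (hk : 0 ≤ k) (hkb : k ≤ b)
    (hx : x ≤ 0) : ‖x * (exp (k * x) - 1)‖ ≤ expRemainder (2 * b * x) / b := by
  have hsign : 0 ≤ x * (exp (k * x) - 1) :=
    mul_nonneg_of_nonpos_of_nonpos hx
      (by linarith [exp_le_one_iff.2 (mul_nonpos_of_nonneg_of_nonpos hk hx)])
  -- the tangent line of `expRemainder` at `k x`, evaluated at `2 b x`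
  have htangent := mul_sub_le_expRemainder_sub (2 * b * x) (k * x)
  have := expRemainder_nonneg (k * x)
  rw [Real.norm_of_nonneg hsign, le_div_iff₀ hb]
  nlinarith [mul_le_mul_of_nonneg_left (show b ≤ 2 * b - k by linarith) hsign]

noncomputable def laplaceExponent (φ : Measure ℝ) (k : ℝ) : ℝ :=
  ∫ x in Iio 0, expRemainder (k * x) ∂φ

noncomputable def laplaceExponentDeriv (φ : Measure ℝ) (k : ℝ) : ℝ :=
  ∫ x in Iio 0, x * (exp (k * x) - 1) ∂φ

lemma psiSemi_neg_I_mul (φ : Measure ℝ) (k : ℝ) :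
    psiSemi φ (-(Complex.I * k)) = laplaceExponent φ k := by
  rw [psiSemi, laplaceExponent, ← integral_complex_ofReal]
  refine integral_congr_ae (ae_of_all _ fun x => ?_)
  have hI : Complex.I * -(Complex.I * k) * x = ((k * x : ℝ) : ℂ) := by
    push_cast
    linear_combination (-(k : ℂ) * x) * Complex.I_mul_I
  simp only [hI, expRemainder]
  push_cast
  ring

lemma mFun_eq (φ : Measure ℝ) (α y : ℝ) :
    mFun φ α y = exp (-(α * y)) * laplaceExponent φ (exp y) := by
  rw [mFun, psiSemi_neg_I_mul, Complex.ofReal_re]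

lemma laplaceExponent_zero (φ : Measure ℝ) : laplaceExponent φ 0 = 0 := by
  simp [laplaceExponent, expRemainder]

section Scaling

variable {α c : ℝ} {θ : ℝ → ℝ} {φ : Measure ℝ}

lemma measure_Iio_div_rpow (hc : 0 < c) (hα : α ≠ 0)
    (hθper : Function.Periodic θ (log (c ^ (1 / α))))
    (hφtail : ∀ x : ℝ, 0 < x → φ (Iio (-x)) = ENNReal.ofReal (x ^ (-α) * θ (log x)))
    {a : ℝ} (ha : a < 0) :
    φ (Iio (a / c ^ (1 / α))) = ENNReal.ofReal c * φ (Iio a) := by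
  obtain ⟨x, hx, rfl⟩ : ∃ x, 0 < x ∧ a = -x := ⟨-a, neg_pos.2 ha, (neg_neg a).symm⟩
  have hr : 0 < c ^ (1 / α) := rpow_pos_of_pos hc _
  have hpow : (x / c ^ (1 / α)) ^ (-α) = c * x ^ (-α) := by
    rw [div_rpow hx.le hr.le, ← rpow_mul hc.le, show 1 / α * -α = -1 by field_simp,
      rpow_neg_one, div_inv_eq_mul, mul_comm]
  rw [neg_div, hφtail _ (div_pos hx hr), hφtail _ hx, log_div hx.ne' hr.ne', hθper.sub_eq, hpow,
    mul_assoc, ENNReal.ofReal_mul hc.le]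

lemma measure_Iio_zero_ne_zero (hθpos : ∀ y, 0 < θ y)
    (hφtail : ∀ x : ℝ, 0 < x → φ (Iio (-x)) = ENNReal.ofReal (x ^ (-α) * θ (log x))) :
    φ (Iio 0) ≠ 0 := by
  have htail := hφtail 1 one_pos
  rw [one_rpow, one_mul, log_one] at htail
  refine (lt_of_lt_of_le ?_ (measure_mono (Iio_subset_Iio (by norm_num : (-1 : ℝ) ≤ 0)))).ne'
  rw [htail]
  exact ENNReal.ofReal_pos.2 (hθpos 0)

/-- Layer-cake formula: the superlevel sets of `x ↦ expRemainder (k x)` are tails `Iio (b / k)`,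
whose measures scale by `c` when `k` is multiplied by `c ^ (1 / α)`. -/
lemma laplaceExponent_rpow_mul (hc : 0 < c) (hα : α ≠ 0)
    (hθper : Function.Periodic θ (log (c ^ (1 / α))))
    (hφtail : ∀ x : ℝ, 0 < x → φ (Iio (-x)) = ENNReal.ofReal (x ^ (-α) * θ (log x)))
    {k : ℝ} (hk : 0 < k) :
    laplaceExponent φ (c ^ (1 / α) * k) = c * laplaceExponent φ k := by
  have hr : 0 < c ^ (1 / α) := rpow_pos_of_pos hc _
  have hlayer : ∀ k, laplaceExponent φ k =
      (∫⁻ t in Ioi 0, φ.restrict (Iio 0) {x | t < expRemainder (k * x)}).toReal := by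
    intro k
    have hcont : Continuous fun x => expRemainder (k * x) := by fun_prop
    rw [laplaceExponent, integral_eq_lintegral_of_nonneg_ae
      (ae_of_all _ fun _ => expRemainder_nonneg _) hcont.aestronglyMeasurable,
      lintegral_eq_lintegral_meas_lt _ (ae_of_all _ fun _ => expRemainder_nonneg _)
        hcont.aemeasurable]
  have hsuperlevel : ∀ {t b k : ℝ}, 0 < k → b < 0 →
      (∀ u ≤ 0, t < expRemainder u ↔ u < b) →
      φ.restrict (Iio 0) {x | t < expRemainder (k * x)} = φ (Iio (b / k)) := by
    intro t b k hk hb hbt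
    rw [Measure.restrict_apply' measurableSet_Iio]
    congr 1
    ext x
    simp only [mem_inter_iff, mem_ofPred_eq, mem_Iio, lt_div_iff₀ hk, mul_comm x k]
    constructor
    · rintro ⟨h, hx⟩
      exact (hbt _ (by nlinarith)).1 h
    · intro h
      exact ⟨(hbt _ (by linarith)).2 h, by nlinarith⟩
  rw [hlayer, hlayer, ← ENNReal.toReal_ofReal_mul _ _ hc.le,
    ← lintegral_const_mul' _ _ ENNReal.ofReal_ne_top]
  congr 1
  refine setLIntegral_congr_fun measurableSet_Ioi fun t ht => ?_
  obtain ⟨b, hb, hbt⟩ := exists_lt_expRemainder_iff ht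
  rw [hsuperlevel (mul_pos hr hk) hb hbt, hsuperlevel hk hb hbt, mul_comm, ← div_div,
    measure_Iio_div_rpow hc hα hθper hφtail (div_neg_of_neg_of_pos hb hk)]

end Scaling

lemma setIntegral_pos_of_forall_mem_pos {X : Type*} [MeasurableSpace X] {μ : Measure X}
    {s : Set X} {g : X → ℝ} (hs : MeasurableSet s) (hg : ∀ x ∈ s, 0 < g x)
    (hint : IntegrableOn g s μ) (hμ : μ s ≠ 0) : 0 < ∫ x in s, g x ∂μ := by
  rw [setIntegral_pos_iff_support_of_nonneg_ae
      (ae_restrict_of_forall_mem hs fun x hx => (hg x hx).le) hint,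
    inter_eq_right.2 (show s ⊆ Function.support g from fun x hx => (hg x hx).ne'),
    pos_iff_ne_zero]
  exact hμ

section Regularity

variable {φ : Measure ℝ}

lemma integrableOn_expRemainder_of_le {k k' : ℝ}
    (h : IntegrableOn (fun x => expRemainder (k' * x)) (Iio 0) φ)
    (hk : 0 ≤ k) (hkk' : k ≤ k') :
    IntegrableOn (fun x => expRemainder (k * x)) (Iio 0) φ := by
  refine h.mono' (by fun_prop) (ae_restrict_of_forall_mem measurableSet_Iio
    fun x (hx : x < 0) => ?_)
  rw [Real.norm_of_nonneg (expRemainder_nonneg _)]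
  exact strictAntiOn_expRemainder.antitoneOn (mul_nonpos_of_nonneg_of_nonpos (hk.trans hkk') hx.le)
    (mul_nonpos_of_nonneg_of_nonpos hk hx.le) (mul_le_mul_of_nonpos_right hkk' hx.le)

lemma integrableOn_expRemainder_mul {r c k₀ : ℝ} (hr : 1 < r) (hc : c ≠ 0)
    (hscale : ∀ k, 0 < k → laplaceExponent φ (r * k) = c * laplaceExponent φ k)
    (hk₀ : 0 < k₀) (h₀ : laplaceExponent φ k₀ ≠ 0) {k : ℝ} (hk : 0 ≤ k) :
    IntegrableOn (fun x => expRemainder (k * x)) (Iio 0) φ := by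
  have hpow : ∀ n : ℕ, laplaceExponent φ (r ^ n * k₀) = c ^ n * laplaceExponent φ k₀ := by
    intro n
    induction n with
    | zero => simp
    | succ n ih =>
      rw [pow_succ', mul_assoc, hscale _ (by positivity), ih, pow_succ', mul_assoc]
  obtain ⟨n, hn⟩ := pow_unbounded_of_one_lt (k / k₀) hr
  -- a non-integrable Bochner integral is `0`, and `L (r ^ n * k₀) = c ^ n * L k₀` is not
  refine integrableOn_expRemainder_of_le (k' := r ^ n * k₀) (Integrable.of_integral_ne_zero ?_) hk
    ((div_lt_iff₀ hk₀).1 hn).le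
  change laplaceExponent φ _ ≠ 0
  rw [hpow]
  exact mul_ne_zero (pow_ne_zero _ hc) h₀

variable (hint : ∀ k, 0 ≤ k → IntegrableOn (fun x => expRemainder (k * x)) (Iio 0) φ)
include hint

lemma strictMonoOn_laplaceExponent (hφ : φ (Iio 0) ≠ 0) :
    StrictMonoOn (laplaceExponent φ) (Ici 0) := by
  intro k₁ (hk₁ : 0 ≤ k₁) k₂ (hk₂ : 0 ≤ k₂) hlt
  have hpos := setIntegral_pos_of_forall_mem_pos measurableSet_Iio
    (g := fun x => expRemainder (k₂ * x) - expRemainder (k₁ * x))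
    (fun x (hx : x < 0) => sub_pos.2 (strictAntiOn_expRemainder
      (mul_nonpos_of_nonneg_of_nonpos hk₂ hx.le) (mul_nonpos_of_nonneg_of_nonpos hk₁ hx.le)
      (mul_lt_mul_of_neg_right hlt hx)))
    ((hint k₂ hk₂).sub (hint k₁ hk₁)) hφ
  rw [integral_sub (hint k₂ hk₂) (hint k₁ hk₁)] at hpos
  exact sub_pos.1 hpos

lemma integrableOn_mul_exp_sub_one {k : ℝ} (hk : 0 < k) :
    IntegrableOn (fun x => x * (exp (k * x) - 1)) (Iio 0) φ :=
  ((hint _ (by positivity)).div_const k).mono' (by fun_prop)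
    (ae_restrict_of_forall_mem measurableSet_Iio fun _ hx =>
      norm_mul_exp_sub_one_le hk hk.le le_rfl (le_of_lt hx))

lemma hasDerivAt_laplaceExponent {k : ℝ} (hk : 0 < k) :
    HasDerivAt (laplaceExponent φ) (laplaceExponentDeriv φ k) k :=
  (hasDerivAt_integral_of_dominated_loc_of_deriv_le (F := fun k x => expRemainder (k * x))
    (bound := fun x => expRemainder (2 * (2 * k) * x) / (2 * k))
    (Ioo_mem_nhds hk (by linarith : k < 2 * k))
    (Eventually.of_forall fun _ => (by fun_prop : Continuous _).aestronglyMeasurable)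
    (hint k hk.le) (by fun_prop)
    (ae_restrict_of_forall_mem measurableSet_Iio fun _ hx _ hk' =>
      norm_mul_exp_sub_one_le (by positivity) hk'.1.le hk'.2.le (le_of_lt hx))
    ((hint _ (by positivity)).div_const (2 * k))
    (ae_of_all _ fun x k' _ => hasDerivAt_expRemainder_mul x k')).2

lemma continuousOn_laplaceExponentDeriv : ContinuousOn (laplaceExponentDeriv φ) (Ioi 0) := by
  intro k (hk : 0 < k)
  refine (continuousAt_of_dominated (bound := fun x => expRemainder (2 * (2 * k) * x) / (2 * k))
    (Eventually.of_forall fun _ => (by fun_prop : Continuous _).aestronglyMeasurable)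
    ?_ ((hint _ (by positivity)).div_const (2 * k)) (ae_of_all _ fun _ => by fun_prop)
    ).continuousWithinAt
  filter_upwards [Ioo_mem_nhds hk (by linarith : k < 2 * k)] with k' hk'
  exact ae_restrict_of_forall_mem measurableSet_Iio fun _ hx =>
    norm_mul_exp_sub_one_le (by positivity) hk'.1.le hk'.2.le (le_of_lt hx)

lemma laplaceExponentDeriv_pos (hφ : φ (Iio 0) ≠ 0) {k : ℝ} (hk : 0 < k) :
    0 < laplaceExponentDeriv φ k :=
  setIntegral_pos_of_forall_mem_pos measurableSet_Iio
    (fun x (hx : x < 0) => mul_pos_of_neg_of_neg hx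
      (sub_neg.2 (exp_lt_one_iff.2 (mul_neg_of_pos_of_neg hk hx))))
    (integrableOn_mul_exp_sub_one hint hk) hφ

end Regularity

section RightInverse

variable {L ξ : ℝ → ℝ} (hL : StrictMonoOn L (Ici 0))
  (hξ : ∀ s, 0 < s → 0 < ξ s ∧ L (ξ s) = s)
include hL hξ

lemma apply_eq_of_rightInverse {k : ℝ} (hk : 0 < k) (hLk : 0 < L k) : ξ (L k) = k :=
  hL.injOn (hξ _ hLk).1.le hk.le (hξ _ hLk).2

lemma strictMonoOn_of_rightInverse : StrictMonoOn ξ (Ioi 0) := fun s hs t ht hst =>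
  (hL.lt_iff_lt (hξ s hs).1.le (hξ t ht).1.le).1 (by rwa [(hξ s hs).2, (hξ t ht).2])

lemma continuousOn_of_rightInverse (hL0 : L 0 = 0) : ContinuousOn ξ (Ioi 0) := by
  intro s (hs : 0 < s)
  refine (continuousAt_of_monotoneOn_of_image_mem_nhds
    (strictMonoOn_of_rightInverse hL hξ).monotoneOn (Ioi_mem_nhds hs)
    (mem_of_superset (Ioi_mem_nhds (hξ s hs).1) fun k (hk : 0 < k) => ?_)).continuousWithinAt
  have hLk : 0 < L k := hL0 ▸ hL self_mem_Ici hk.le hk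
  exact ⟨L k, hLk, apply_eq_of_rightInverse hL hξ hk hLk⟩

lemma rightInverse_mul {r c : ℝ} (hr : 0 < r) (hc : 0 < c)
    (hscale : ∀ k, 0 < k → L (r * k) = c * L k) {s : ℝ} (hs : 0 < s) :
    ξ (c * s) = r * ξ s := by
  have hcs := hξ _ (mul_pos hc hs)
  refine hL.injOn hcs.1.le (mul_pos hr (hξ s hs).1).le ?_
  rw [hcs.2, hscale _ (hξ s hs).1, (hξ s hs).2]

end RightInverse

lemma _root_.Function.Periodic.deriv {𝕜 F : Type*} [NontriviallyNormedField 𝕜]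
    [NormedAddCommGroup F] [NormedSpace 𝕜 F] {f : 𝕜 → F} {p : 𝕜}
    (h : Function.Periodic f p) : Function.Periodic (deriv f) p := fun x => by
  rw [← deriv_comp_add_const, funext h]

lemma rpow_mul_deriv_log_rpow_mul {m : ℝ → ℝ} {α c k : ℝ} (hc : 0 < c) (hα : α ≠ 0)
    (hm : Function.Periodic m (log (c ^ (1 / α)))) (hk : 0 < k) :
    1 / α * (c ^ (1 / α) * k) ^ α * deriv m (log (c ^ (1 / α) * k)) =
      c * (1 / α * k ^ α * deriv m (log k)) := by
  have hr : 0 < c ^ (1 / α) := rpow_pos_of_pos hc _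
  rw [log_mul hr.ne' hk.ne', add_comm, hm.deriv, mul_rpow hr.le hk.le, ← rpow_mul hc.le,
    one_div_mul_cancel hα, rpow_one]
  ring

section Symbol

variable {φ : Measure ℝ} {α : ℝ}

lemma mFun_periodic {c : ℝ} (hc : 0 < c) (hα : α ≠ 0)
    (hscale : ∀ k, 0 < k → laplaceExponent φ (c ^ (1 / α) * k) = c * laplaceExponent φ k) :
    Function.Periodic (mFun φ α) (log (c ^ (1 / α))) := by
  intro y
  have hshift : exp (y + log (c ^ (1 / α))) = c ^ (1 / α) * exp y := by
    rw [exp_add, exp_log (rpow_pos_of_pos hc _), mul_comm]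
  have hdamp : exp (-(α * (y + log (c ^ (1 / α))))) = exp (-(α * y)) / c := by
    rw [log_rpow hc, show -(α * (y + 1 / α * log c)) = -(α * y) - log c by field_simp; ring,
      exp_sub, exp_log hc]
  rw [mFun_eq, mFun_eq, hshift, hdamp, hscale _ (exp_pos y)]
  field_simp

variable (hint : ∀ k, 0 ≤ k → IntegrableOn (fun x => expRemainder (k * x)) (Iio 0) φ)
include hint

lemma hasDerivAt_mFun (y : ℝ) :
    HasDerivAt (mFun φ α) (exp (-(α * y)) *
      (exp y * laplaceExponentDeriv φ (exp y) - α * laplaceExponent φ (exp y))) y := by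
  have hL : HasDerivAt (fun y => laplaceExponent φ (exp y))
      (laplaceExponentDeriv φ (exp y) * exp y) y :=
    (hasDerivAt_laplaceExponent hint (exp_pos y)).comp y (hasDerivAt_exp y)
  have hE : HasDerivAt (fun y => -(α * y)) (-α) y := by
    simpa using ((hasDerivAt_id y).const_mul α).fun_neg
  rw [show mFun φ α = fun y => exp (-(α * y)) * laplaceExponent φ (exp y) from
    funext (mFun_eq φ α)]
  exact (hE.exp.mul hL).congr_deriv (by ring)

lemma rpow_mul_deriv_mFun_log (hα : α ≠ 0) {k : ℝ} (hk : 0 < k) :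
    1 / α * k ^ α * deriv (mFun φ α) (log k) =
      k * laplaceExponentDeriv φ k / α - laplaceExponent φ k := by
  have hkα : 0 < k ^ α := rpow_pos_of_pos hk α
  rw [(hasDerivAt_mFun hint _).deriv, exp_log hk,
    show exp (-(α * log k)) = (k ^ α)⁻¹ by rw [rpow_def_of_pos hk, ← exp_neg, mul_comm]]
  field_simp

end Symbol

section Gamma

variable {α : ℝ} {f ξ : ℝ → ℝ}

lemma gammaFun_periodic {c : ℝ} (hα : α ≠ 0) (hc : 0 < c)
    (hξ : ∀ s, 0 < s → ξ (c * s) = c ^ (1 / α) * ξ s)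
    (hf : ∀ s, 0 < s → f (c * s) = c * f s) :
    Function.Periodic (gammaFun α f ξ) (log c) := by
  intro x
  have hdamp : exp (-(x + log c) / α) * c ^ (1 / α) = exp (-x / α) := by
    rw [rpow_def_of_pos hc, ← exp_add]
    congr 1
    field_simp
    ring
  have hratio : ∀ a b : ℝ, -(c * b) / (c * a + c * b) = -b / (a + b) := fun a b => by
    rw [← mul_add, ← mul_neg, mul_div_mul_left _ _ hc.ne']
  rw [gammaFun, gammaFun, exp_add, exp_log hc, mul_comm _ c, hξ _ (exp_pos x), hf _ (exp_pos x),
    hratio, ← hdamp]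
  ring

lemma mul_gammaFun_log {s : ℝ} (hs : 0 < s) :
    -f s / (s + f s) * ξ s = s ^ (1 / α) * gammaFun α f ξ (log s) := by
  have hcancel : s ^ (1 / α) * exp (-log s / α) = 1 := by
    rw [rpow_def_of_pos hs, ← exp_add, show log s * (1 / α) + -log s / α = 0 by ring, exp_zero]
  rw [gammaFun, exp_log hs]
  linear_combination (-(-f s / (s + f s) * ξ s)) * hcancel

lemma continuous_gammaFun (hξ : ContinuousOn ξ (Ioi 0)) (hf : ContinuousOn f (Ioi 0))
    (hden : ∀ s, 0 < s → s + f s ≠ 0) : Continuous (gammaFun α f ξ) := by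
  have hξe : Continuous fun x => ξ (exp x) := hξ.comp_continuous continuous_exp exp_pos
  have hfe : Continuous fun x => f (exp x) := hf.comp_continuous continuous_exp exp_pos
  exact ((by fun_prop : Continuous fun x : ℝ => exp (-x / α)).mul
    (hfe.neg.div (continuous_exp.add hfe) fun x => hden _ (exp_pos x))).mul hξe

end Gamma

end Semistable

open Semistable

theorem gamma_periodic_general
    (α c : ℝ) (hα : 1 < α ∧ α < 2) (hc : 1 < c)
    (θ : ℝ → ℝ) (hθpos : ∀ y : ℝ, 0 < θ y)
    (hθper : Function.Periodic θ (Real.log (c ^ (1 / α))))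
    (φm : MeasureTheory.Measure ℝ)
    (hφtail : ∀ x : ℝ, 0 < x → φm (Set.Iio (-x)) = ENNReal.ofReal (x ^ (-α) * θ (Real.log x)))
    (ξ : ℝ → ℝ)
    (hξ : ∀ s : ℝ, 0 < s → 0 < ξ s ∧ psiSemi φm (-(Complex.I * (ξ s : ℂ))) = (s : ℂ))
    (f : ℝ → ℝ)
    (hf : ∀ s : ℝ, 0 < s →
      f s = (1 / α) * ξ s ^ α * deriv (mFun φm α) (Real.log (ξ s))) :
    Continuous (gammaFun α f ξ) ∧
    Function.Periodic (gammaFun α f ξ) (Real.log c) ∧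
    (∀ s : ℝ, 0 < s →
      (-(f s) / (s + f s)) * ξ s = s ^ (1 / α) * gammaFun α f ξ (Real.log s)) := by
  have hαpos : 0 < α := by linarith [hα.1]
  have hc0 : 0 < c := zero_lt_one.trans hc
  have hξL : ∀ s, 0 < s → 0 < ξ s ∧ laplaceExponent φm (ξ s) = s := fun s hs =>
    ⟨(hξ s hs).1, by exact_mod_cast (psiSemi_neg_I_mul φm (ξ s)).symm.trans (hξ s hs).2⟩
  have hscale :
      ∀ k, 0 < k → laplaceExponent φm (c ^ (1 / α) * k) = c * laplaceExponent φm k :=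
    fun k => laplaceExponent_rpow_mul hc0 hαpos.ne' hθper hφtail
  have hint : ∀ k, 0 ≤ k → IntegrableOn (fun x => expRemainder (k * x)) (Iio 0) φm :=
    fun k => integrableOn_expRemainder_mul (one_lt_rpow hc (one_div_pos.2 hαpos)) hc0.ne'
      hscale (hξL 1 one_pos).1 (by rw [(hξL 1 one_pos).2]; exact one_ne_zero)
  have hφ := measure_Iio_zero_ne_zero hθpos hφtail
  have hmono := strictMonoOn_laplaceExponent hint hφ
  have hξc := continuousOn_of_rightInverse hmono hξL (laplaceExponent_zero φm)
  have hξmul (s) (hs : 0 < s) : ξ (c * s) = c ^ (1 / α) * ξ s :=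
    rightInverse_mul hmono hξL (rpow_pos_of_pos hc0 _) hc0 hscale hs
  have hfmul (s) (hs : 0 < s) : f (c * s) = c * f s := by
    rw [hf _ (mul_pos hc0 hs), hf s hs, hξmul s hs, rpow_mul_deriv_log_rpow_mul hc0 hαpos.ne'
      (mFun_periodic hc0 hαpos.ne' hscale) (hξL s hs).1]
  have hfeq (s) (hs : 0 < s) : f s = ξ s * laplaceExponentDeriv φm (ξ s) / α - s := by
    rw [hf s hs, rpow_mul_deriv_mFun_log hint hαpos.ne' (hξL s hs).1, (hξL s hs).2]
  have hfc : ContinuousOn f (Ioi 0) :=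
    (((hξc.mul ((continuousOn_laplaceExponentDeriv hint).comp hξc fun s hs => (hξL s hs).1)
      ).div_const α).sub continuousOn_id).congr hfeq
  have hden (s) (hs : 0 < s) : s + f s ≠ 0 := by
    have := laplaceExponentDeriv_pos hint hφ (hξL s hs).1
    have := (hξL s hs).1
    rw [hfeq s hs, add_sub_cancel]
    positivity
  exact ⟨continuous_gammaFun hξc hfc hden, gammaFun_periodic hαpos.ne' hc0 hξmul hfmul,
    fun s hs => mul_gammaFun_log hs⟩

/-- Lemma 4.3: `γ(x) = e^{-x/α} (−f(e^x)/(e^x + f(e^x))) ξ(e^x)` is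
continuous and `log c`-periodic, and `(−f(s)/(s + f(s))) ξ(s) = s^{1/α} γ(log s)`. -/
theorem gamma_periodic
    (α c : ℝ) (hα : 1 < α ∧ α < 2) (hc : 1 < c)
    (θ : ℝ → ℝ) (hθc : Continuous θ) (hθpos : ∀ y : ℝ, 0 < θ y)
    (hθper : Function.Periodic θ (Real.log (c ^ (1 / α))))
    (hθmono : AntitoneOn (fun x : ℝ => x ^ (-α) * θ (Real.log x)) (Set.Ioi 0))
    (φm : MeasureTheory.Measure ℝ)
    (hφtail : ∀ x : ℝ, 0 < x → φm (Set.Iio (-x)) = ENNReal.ofReal (x ^ (-α) * θ (Real.log x)))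
    (hφsupp : φm (Set.Ici 0) = 0)
    (ξ : ℝ → ℝ)
    (hξ : ∀ s : ℝ, 0 < s → 0 < ξ s ∧ psiSemi φm (-(Complex.I * (ξ s : ℂ))) = (s : ℂ))
    (f : ℝ → ℝ)
    (hf : ∀ s : ℝ, 0 < s →
      f s = (1 / α) * ξ s ^ α * deriv (mFun φm α) (Real.log (ξ s))) :
    Continuous (gammaFun α f ξ) ∧
    Function.Periodic (gammaFun α f ξ) (Real.log c) ∧
    (∀ s : ℝ, 0 < s →
      (-(f s) / (s + f s)) * ξ s = s ^ (1 / α) * gammaFun α f ξ (Real.log s)) :=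
  gamma_periodic_general α c hα hc θ hθpos hθper φm hφtail ξ hξ f hf
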